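/- Let γ be an (ε)-contour in Λ(l) at σ intersecting exactly one of the four sides F_l^j of Q(Λ(l)). If j = ±1 (a vertical side) then Δ_γ H^ω_{Λ(l)}(σ) ≥ |{horizontal dual bonds in γ}|; if j = ±2 (a horizontal side) then Δ_γ H^ω_{Λ(l)}(σ) ≥ |{vertical dual bonds in γ}|. -/

import Mathlib

open Finset

/-! ### Basic lattice notions for the 2-D Ising model on the square Λ(l) -/

abbrev Site := ℤ × ℤ

/-- `l¹`-distance on `ℤ²`. -/
def d1 (x y : Site) : ℤ := |x.1 - y.1| + |x.2 - y.2|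

/-- `l∞`-distance on `ℤ²`. -/
def dinf (x y : Site) : ℤ := max |x.1 - y.1| |x.2 - y.2|

/-- There is a path from `x` to `y` inside `S` with steps of `d`-distance 1. -/
def ChainIn (d : Site → Site → ℤ) (S : Set Site) (x y : Site) : Prop :=
  ∃ L : List Site, L.Chain' (fun a b => d a b = 1) ∧ L.head? = some x ∧
    L.getLast? = some y ∧ ∀ a ∈ L, a ∈ S

/-- `S` is connected with respect to steps of `d`-distance 1. -/
def ConnIn (d : Site → Site → ℤ) (S : Set Site) : Prop :=
  ∀ x ∈ S, ∀ y ∈ S, ChainIn d S x y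

def lamLo (l : ℕ) : ℤ := 1 - (((l + 1) / 2 : ℕ) : ℤ)
def lamHi (l : ℕ) : ℤ := ((l / 2 : ℕ) : ℤ)

/-- The lamBox the box. -/
noncomputable def lamBox (l : ℕ) : Finset Site := Finset.Icc (lamLo l, lamLo l) (lamHi l, lamHi l)

/-- The exterior boundary `∂_ex Λ(l)`. -/
def extBdry (l : ℕ) : Set Site := {y | y ∉ lamBox l ∧ ∃ x ∈ lamBox l, d1 x y = 1}

/-- An interval of `∂_ex Λ(l)` : an `l∞`-connected subset of it. -/
def IsBdryInterval (l : ℕ) (I : Finset Site) : Prop :=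
  (↑I : Set Site) ⊆ extBdry l ∧ ConnIn dinf ↑I

/-- The four nearest neighbours of a site. -/
def nbrs (x : Site) : Finset Site :=
  {(x.1 + 1, x.2), (x.1 - 1, x.2), (x.1, x.2 + 1), (x.1, x.2 - 1)}

/-- A dual bond, recorded by its two endpoints `v`, a dual vertex `v` standing for the
point `v + (1/2, 1/2)` of the dual lattice. -/
abbrev DBond := Sym2 Site

/-- The dual bond of the nearest-neighbour bond `{x, y}`. -/
def dualBond (x y : Site) : DBond :=
  if x.2 = y.2 then s((min x.1 y.1, x.2 - 1), (min x.1 y.1, x.2))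
  else s((x.1 - 1, min x.2 y.2), (x.1, min x.2 y.2))

/-- `∂Q(Θ)` : the set of dual bonds separating `Θ` from its complement. -/
def contourOf (Θ : Finset Site) : Finset DBond :=
  Θ.biUnion fun x => ((nbrs x).filter (· ∉ Θ)).image fun y => dualBond x y

/-- `Θ` and its complement are `l¹`-connected, so that `∂Q(Θ)` is a contour. -/
def IsContourRegion (Θ : Finset Site) : Prop :=
  ConnIn d1 ↑Θ ∧ ConnIn d1 ((↑Θ : Set Site)ᶜ)

/-- `∂Q(Λ(l))`, as a set of dual bonds. -/
noncomputable def boxBdry (l : ℕ) : Finset DBond := contourOf (lamBox l)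

/-- The dual vertex `v` lies on the side `F_l^j` of `Q(Λ(l))` (`j ∈ {1,-1,2,-2}` for
right, left, top, bottom). -/
def onSide (l : ℕ) (j : ℤ) (v : Site) : Prop :=
  (j = 1 ∧ v.1 = lamHi l ∧ lamLo l - 1 ≤ v.2 ∧ v.2 ≤ lamHi l) ∨
  (j = -1 ∧ v.1 = lamLo l - 1 ∧ lamLo l - 1 ≤ v.2 ∧ v.2 ≤ lamHi l) ∨
  (j = 2 ∧ v.2 = lamHi l ∧ lamLo l - 1 ≤ v.1 ∧ v.1 ≤ lamHi l) ∨
  (j = -2 ∧ v.2 = lamLo l - 1 ∧ lamLo l - 1 ≤ v.1 ∧ v.1 ≤ lamHi l)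

/-- The set of dual bonds `γ` meets the side `F_l^j`. -/
def touches (l : ℕ) (j : ℤ) (γ : Finset DBond) : Prop :=
  ∃ e ∈ γ, ∃ v : Site, v ∈ e ∧ onSide l j v

def HorizCrossing (l : ℕ) (γ : Finset DBond) : Prop := touches l 1 γ ∧ touches l (-1) γ
def VertCrossing (l : ℕ) (γ : Finset DBond) : Prop := touches l 2 γ ∧ touches l (-2) γ

/-- `γ` is neither horizontally nor vertically crossing. -/
def NonCrossing (l : ℕ) (γ : Finset DBond) : Prop :=
  ¬ (HorizCrossing l γ ∨ VertCrossing l γ)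

/-- Two dual bonds are adjacent if they share a dual vertex. -/
def DAdj (a b : DBond) : Prop := ∃ v : Site, v ∈ a ∧ v ∈ b

/-- A set of dual bonds is connected (via shared dual vertices). -/
def DConn (S : Finset DBond) : Prop :=
  ∀ e ∈ S, ∀ f ∈ S, ∃ L : List DBond, L.Chain' DAdj ∧ L.head? = some e ∧
    L.getLast? = some f ∧ ∀ a ∈ L, a ∈ S

/-- Dual bonds separating `Θt` from `Λ(l) \ Θt` inside the lamBox. -/
noncomputable def interiorBdry (l : ℕ) (Θt : Finset Site) : Finset DBond :=
  Θt.biUnion fun x => ((nbrs x).filter fun y => y ∈ lamBox l ∧ y ∉ Θt).image fun y => dualBond x y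

/-- The sites of `Λ(l)` along the side `F_l^j`. -/
def sideSites (l : ℕ) (j : ℤ) (x : Site) : Prop :=
  x ∈ lamBox l ∧ ((j = 1 ∧ x.1 = lamHi l) ∨ (j = -1 ∧ x.1 = lamLo l) ∨
    (j = 2 ∧ x.2 = lamHi l) ∨ (j = -2 ∧ x.2 = lamLo l))

/-- The data of the distinguished connected component `γ̲ = γu` of `γ \ ∂Q(Λ(l))` and of the
region `Θ̃ = Θt` into which a non-crossing contour `γ = ∂Q(Θ)` divides the lamBox: `γu` is a
connected component of `γ \ ∂Q(Λ(l))` dividing `Λ(l)` into the `l¹`-connected pieces `Θt` and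
`Λ(l) \ Θt`, with `Θ ⊆ Θt` and `F_l^i ∪ F_l^j ⊆ ∂Q(Λ(l) \ Θt)` for untouched sides `i, j`. -/
def UnderlineData (l : ℕ) (Θ : Finset Site) (γu : Finset DBond) (Θt : Finset Site) : Prop :=
  γu ⊆ contourOf Θ \ boxBdry l ∧ DConn γu ∧
  (∀ e ∈ contourOf Θ \ boxBdry l, e ∉ γu → ∀ f ∈ γu, ¬ DAdj e f) ∧
  Θ ⊆ Θt ∧ Θt ⊆ lamBox l ∧ ConnIn d1 ↑Θt ∧ ConnIn d1 ↑(lamBox l \ Θt) ∧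
  interiorBdry l Θt = γu ∧
  ∃ i j : ℤ, (i = 1 ∨ i = -1) ∧ (j = 2 ∨ j = -2) ∧
    ¬ touches l i (contourOf Θ) ∧ ¬ touches l j (contourOf Θ) ∧
    (∀ x, sideSites l i x → x ∉ Θt) ∧ (∀ x, sideSites l j x → x ∉ Θt)

/-- `γ̄ = ∂Q(Λ(l)) ∩ ∂Q(Θ̃)`. -/
noncomputable def gammaBar (l : ℕ) (Θt : Finset Site) : Finset DBond := boxBdry l ∩ contourOf Θt

/-- `V_ex(γ)` : sites of the exterior boundary attached to dual bonds of `γ`. -/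
noncomputable def Vex (l : ℕ) (γ : Finset DBond) : Finset Site :=
  (lamBox l).biUnion fun x => (nbrs x).filter fun y => y ∉ lamBox l ∧ dualBond x y ∈ γ

/-- `T_Θ` : flip the spins in `Θ`. -/
def flipC (Θ : Finset Site) (σ : Site → ℤ) : Site → ℤ :=
  fun x => if x ∈ Θ then -σ x else σ x

/-- The Ising Hamiltonian `H^ω_{Λ(l)}(σ)` with boundary condition `ω`. -/
noncomputable def Ham (l : ℕ) (ω : Site → ℝ) (σ : Site → ℤ) : ℝ :=
  -(1/2) * ∑ x ∈ lamBox l, ∑ y ∈ (nbrs x).filter (· ∈ lamBox l), ((σ x * σ y : ℤ) : ℝ)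
    - ∑ x ∈ lamBox l, ∑ y ∈ (nbrs x).filter (· ∉ lamBox l), (σ x : ℝ) * ω y

/-- `Δ_{γ₁,…,γ_p} H^ω_{Λ(l)}(σ) = H(σ) - H(T_{γ₁}∘⋯∘T_{γ_p} σ)`, the contours being
recorded by their regions `Θ(γ_j)`. -/
noncomputable def dH (l : ℕ) (ω : Site → ℝ) (Θs : List (Finset Site)) (σ : Site → ℤ) : ℝ :=
  Ham l ω σ - Ham l ω (Θs.foldr flipC σ)

/-- `C` is an (ε)-cluster in `Λ(l)` at `σ` : a maximal `l¹`-connected component of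
`{x ∈ Λ(l) : σ_x = ε}`. -/
def IsCluster (l : ℕ) (σ : Site → ℤ) (ε : ℤ) (C : Finset Site) : Prop :=
  C.Nonempty ∧ (∀ x ∈ C, x ∈ lamBox l ∧ σ x = ε) ∧ ConnIn d1 ↑C ∧
  ∀ y ∈ lamBox l, σ y = ε → (∃ x ∈ C, d1 x y = 1) → y ∈ C

/-- The `l¹`-connected component of `x` within `S`. -/
def l1Comp (S : Set Site) (x : Site) : Set Site := {y | ChainIn d1 S x y}

/-- `C` together with the bounded components of its complement; `∂Q(fill C)` is the outer
boundary of `Q(C)`. -/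
def fill (C : Finset Site) : Set Site :=
  ↑C ∪ {x | (l1Comp ((↑C : Set Site)ᶜ) x).Finite}

/-- `Θ` is the region `Θ(γ)` of an (ε)-contour `γ` in `Λ(l)` at `σ`. -/
def IsEContour (l : ℕ) (σ : Site → ℤ) (ε : ℤ) (Θ : Finset Site) : Prop :=
  ∃ C : Finset Site, IsCluster l σ ε C ∧ (↑Θ : Set Site) = fill C

/-- A dual bond is horizontal. -/
def isHorizD (e : DBond) : Prop := ∃ v w : Site, e = s(v, w) ∧ v.2 = w.2

/-- A dual bond is vertical. -/
def isVertD (e : DBond) : Prop := ∃ v w : Site, e = s(v, w) ∧ v.1 = w.1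

open Classical in
/-- The number of horizontal dual bonds in `γ`. -/
noncomputable def horizCount (γ : Finset DBond) : ℕ := (γ.filter isHorizD).card

open Classical in
/-- The number of vertical dual bonds in `γ`. -/
noncomputable def vertCount (γ : Finset DBond) : ℕ := (γ.filter isVertD).card

/-! ### Glauber dynamics -/

/-- Configurations on a finite `Λ ⊂ ℤ²` (`true` = spin `+1`, `false` = spin `-1`). -/
abbrev Cfg (Λ : Finset Site) := ↥Λ → Bool

/-- The spin value of a Boolean. -/
def spinVal (b : Bool) : ℝ := if b then 1 else -1

/-- The Ising Hamiltonian on a general finite `Λ`. -/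
noncomputable def HamG (Λ : Finset Site) (ω : Site → ℝ) (σ : Cfg Λ) : ℝ :=
  -(1/2) * ∑ x : ↥Λ, ∑ y : ↥Λ, (if d1 ↑x ↑y = 1 then spinVal (σ x) * spinVal (σ y) else 0)
    - ∑ x : ↥Λ, ∑ y ∈ (nbrs ↑x).filter (· ∉ Λ), spinVal (σ x) * ω y

/-- The finite-volume Gibbs measure `μ^ω_Λ` at inverse temperature `β`. -/
noncomputable def gibbs (Λ : Finset Site) (ω : Site → ℝ) (β : ℝ) (σ : Cfg Λ) : ℝ :=
  Real.exp (-β * HamG Λ ω σ) / ∑ τ : Cfg Λ, Real.exp (-β * HamG Λ ω τ)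

/-- The mean of `f` under the weights `μ`. -/
noncomputable def meanW (Λ : Finset Site) (μ f : Cfg Λ → ℝ) : ℝ := ∑ σ : Cfg Λ, μ σ * f σ

/-- `σ^x` : flip the spin at `x`. -/
def flipAt (Λ : Finset Site) (σ : Cfg Λ) (x : ↥Λ) : Cfg Λ := Function.update σ x (!(σ x))

/-- The generator `A^ω_Λ` of the stochastic Ising model with flip rates `q`. -/
noncomputable def genA (Λ : Finset Site) (q : ↥Λ → Cfg Λ → ℝ) (f : Cfg Λ → ℝ) (σ : Cfg Λ) : ℝ :=
  ∑ x : ↥Λ, q x σ * (f (flipAt Λ σ x) - f σ)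

/-- The variance `μ(|f - μf|²)`. -/
noncomputable def varW (Λ : Finset Site) (μ f : Cfg Λ → ℝ) : ℝ :=
  meanW Λ μ (fun σ => |f σ - meanW Λ μ f| ^ 2)

/-- The spectral gap `gap(Λ, ω, β)` : the infimum of the Rayleigh quotients
`-μ(f A f) / μ(|f - μf|²)`. -/
noncomputable def specGap (Λ : Finset Site) (ω : Site → ℝ) (β : ℝ)
    (q : ↥Λ → Cfg Λ → ℝ) : ℝ :=
  sInf { r | ∃ f : Cfg Λ → ℝ, varW Λ (gibbs Λ ω β) f ≠ 0 ∧
    r = (- meanW Λ (gibbs Λ ω β) fun σ => f σ * genA Λ q f σ) / varW Λ (gibbs Λ ω β) f }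

/-- The `±1`-spin function of a configuration on `Λ(l)` (`0` outside the lamBox). -/
noncomputable def toSpin (l : ℕ) (σ : Cfg (lamBox l)) : Site → ℤ :=
  fun x => if h : x ∈ lamBox l then (if σ ⟨x, h⟩ then 1 else -1) else 0

/-- The magnetization at the origin, `μ^ω_{Λ(l)}(σ₀)`. -/
noncomputable def magZero (l : ℕ) (ω : Site → ℝ) (β : ℝ) : ℝ :=
  ∑ σ : Cfg (lamBox l), gibbs (lamBox l) ω β σ * ((toSpin l σ (0, 0) : ℤ) : ℝ)

/-- The favoured sign `ε_{l,ω}`. -/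
noncomputable def epsSign (l : ℕ) (ω : Site → ℝ) (β : ℝ) : ℤ :=
  if 0 ≤ magZero l ω β then 1 else -1

/-- The trap event `Γ_l` : some (ε)-contour `γ` at `σ` meets `∂Q(Λ(l))` and has
`|γ| ≥ 2δ₁ l`. -/
def GammaEvent (l : ℕ) (δ₁ : ℝ) (ε : ℤ) : Set (Cfg (lamBox l)) :=
  {σ | ∃ Θ : Finset Site, IsEContour l (toSpin l σ) ε Θ ∧
    (contourOf Θ ∩ boxBdry l).Nonempty ∧ 2 * δ₁ * l ≤ ((contourOf Θ).card : ℝ)}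

open Classical in
/-- The Gibbs probability of an event `S ⊂ Ω_{Λ(l)}`. -/
noncomputable def probOf (l : ℕ) (ω : Site → ℝ) (β : ℝ) (S : Set (Cfg (lamBox l))) : ℝ :=
  ∑ σ ∈ Finset.univ.filter (· ∈ S), gibbs (lamBox l) ω β σ

/-- Union of the contours of a list of regions. -/
def unionB (L : List (Finset Site)) : Finset DBond :=
  L.foldr (fun Θ s => contourOf Θ ∪ s) ∅

/-- Union of a list of regions. -/
def unionR (L : List (Finset Site)) : Finset Site :=
  L.foldr (· ∪ ·) ∅


/-!
Write `γ = ∂Q(Θ)`. Inside `Λ(l)` the spins on the two sides of `γ` are opposite, so flipping `Θ`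
gains `2` across every bond of `γ \ ∂Q(Λ(l))` and, since `|ω| ≤ 1`, loses at most `2` across
every bond of `γ ∩ ∂Q(Λ(l))`: `Δ_γ H ≥ 2 |γ \ ∂Q(Λ(l))| - 2 |γ ∩ ∂Q(Λ(l))|`.

If `γ` meets `∂Q(Λ(l))` only on a vertical side, its horizontal bonds all lie in
`γ \ ∂Q(Λ(l))`, and every row carrying a bond of `γ ∩ ∂Q(Λ(l))` has exactly one end site in `Θ`,
so it also carries a vertical bond of `γ \ ∂Q(Λ(l))`. Hence
`|γ \ ∂Q(Λ(l))| ≥ |horizontal bonds of γ| + |γ ∩ ∂Q(Λ(l))|`. Horizontal sides are reduced to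
vertical ones by transposing the lattice.
-/

theorem Int.exists_not_iff_add_one {p : ℤ → Prop} {a b : ℤ} (hab : a ≤ b) (h : ¬(p a ↔ p b)) :
    ∃ m, a ≤ m ∧ m < b ∧ ¬(p m ↔ p (m + 1)) := by
  by_contra! hstep
  have hconst : ∀ n, a ≤ n → n ≤ b → (p a ↔ p n) := by
    intro n han
    induction n, han using Int.leInduction with
    | base => exact fun _ => Iff.rfl
    | succ n han ih => exact fun hnb => (ih (by omega)).trans (hstep n han (by omega))
  exact h (hconst b hab le_rfl)

lemma mem_lamBox {l : ℕ} {x : Site} :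
    x ∈ lamBox l ↔ lamLo l ≤ x.1 ∧ x.1 ≤ lamHi l ∧ lamLo l ≤ x.2 ∧ x.2 ≤ lamHi l := by
  simp only [lamBox, Finset.mem_Icc, Prod.le_def]
  tauto

lemma swap_mem_lamBox {l : ℕ} {x : Site} : x.swap ∈ lamBox l ↔ x ∈ lamBox l := by
  simp only [mem_lamBox, Prod.fst_swap, Prod.snd_swap]
  tauto

lemma mem_nbrs {x y : Site} :
    y ∈ nbrs x ↔
      y = (x.1 + 1, x.2) ∨ y = (x.1 - 1, x.2) ∨ y = (x.1, x.2 + 1) ∨ y = (x.1, x.2 - 1) := by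
  simp [nbrs]

lemma mem_nbrs_comm {x y : Site} : y ∈ nbrs x ↔ x ∈ nbrs y := by
  simp only [mem_nbrs, Prod.ext_iff]; omega

lemma swap_mem_nbrs_swap {x y : Site} : y.swap ∈ nbrs x.swap ↔ y ∈ nbrs x := by
  simp only [mem_nbrs, Prod.ext_iff, Prod.fst_swap, Prod.snd_swap]
  omega

lemma d1_eq_one_of_mem_nbrs {x y : Site} (h : y ∈ nbrs x) : d1 x y = 1 := by
  rcases mem_nbrs.1 h with rfl | rfl | rfl | rfl <;> simp [d1]

lemma dualBond_right (x : Site) : dualBond x (x.1 + 1, x.2) = s((x.1, x.2 - 1), (x.1, x.2)) := by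
  simp [dualBond]

lemma dualBond_left (x : Site) :
    dualBond x (x.1 - 1, x.2) = s((x.1 - 1, x.2 - 1), (x.1 - 1, x.2)) := by
  simp [dualBond]

lemma dualBond_up (x : Site) : dualBond x (x.1, x.2 + 1) = s((x.1 - 1, x.2), (x.1, x.2)) := by
  simp [dualBond]

lemma dualBond_down (x : Site) :
    dualBond x (x.1, x.2 - 1) = s((x.1 - 1, x.2 - 1), (x.1, x.2 - 1)) := by
  rw [dualBond, if_neg (by omega)]
  simp

lemma dualBond_comm {x y : Site} (hxy : y ∈ nbrs x) : dualBond y x = dualBond x y := by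
  rcases mem_nbrs.1 hxy with rfl | rfl | rfl | rfl <;> simp [dualBond]
  omega

lemma dualBond_inj {x y x' y' : Site} (hy : y ∈ nbrs x) (hy' : y' ∈ nbrs x')
    (h : dualBond x y = dualBond x' y') : (x = x' ∧ y = y') ∨ (x = y' ∧ y = x') := by
  rcases mem_nbrs.1 hy with rfl | rfl | rfl | rfl <;>
    rcases mem_nbrs.1 hy' with rfl | rfl | rfl | rfl <;>
    simp only [dualBond_right, dualBond_left, dualBond_up, dualBond_down, Sym2.eq_iff,
      Prod.ext_iff] at h ⊢ <;> omega

lemma dualBond_swap {x y : Site} (hxy : y ∈ nbrs x) :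
    dualBond x.swap y.swap = (dualBond x y).map Prod.swap := by
  rcases mem_nbrs.1 hxy with rfl | rfl | rfl | rfl
  · rw [dualBond_right]; exact dualBond_up x.swap
  · rw [dualBond_left]; exact dualBond_down x.swap
  · rw [dualBond_up]; exact dualBond_right x.swap
  · rw [dualBond_down]; exact dualBond_left x.swap

lemma isHorizD_mk (v w : Site) : isHorizD s(v, w) ↔ v.2 = w.2 := by
  refine ⟨fun ⟨a, b, h, hab⟩ => ?_, fun h => ⟨v, w, rfl, h⟩⟩
  rcases Sym2.eq_iff.1 h with ⟨rfl, rfl⟩ | ⟨rfl, rfl⟩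
  exacts [hab, hab.symm]

lemma isVertD_mk (v w : Site) : isVertD s(v, w) ↔ v.1 = w.1 := by
  refine ⟨fun ⟨a, b, h, hab⟩ => ?_, fun h => ⟨v, w, rfl, h⟩⟩
  rcases Sym2.eq_iff.1 h with ⟨rfl, rfl⟩ | ⟨rfl, rfl⟩
  exacts [hab, hab.symm]

lemma isHorizD_map_swap (e : DBond) : isHorizD (e.map Prod.swap) ↔ isVertD e := by
  induction e using Sym2.ind with
  | _ v w => simp [isHorizD_mk, isVertD_mk]

lemma mem_contourOf {Θ : Finset Site} {e : DBond} :
    e ∈ contourOf Θ ↔ ∃ x ∈ Θ, ∃ y ∈ nbrs x, y ∉ Θ ∧ e = dualBond x y := by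
  simp only [contourOf, Finset.mem_biUnion, Finset.mem_image, Finset.mem_filter, and_assoc,
    eq_comm (a := e)]

lemma dualBond_mem_contourOf {Θ : Finset Site} {x y : Site} (hxy : y ∈ nbrs x)
    (h : ¬(x ∈ Θ ↔ y ∈ Θ)) : dualBond x y ∈ contourOf Θ := by
  by_cases hx : x ∈ Θ
  · exact mem_contourOf.2 ⟨x, hx, y, hxy, fun hy => h (iff_of_true hx hy), rfl⟩
  · exact mem_contourOf.2 ⟨y, by tauto, x, mem_nbrs_comm.1 hxy, hx, (dualBond_comm hxy).symm⟩

lemma dualBond_notMem_boxBdry {l : ℕ} {x y : Site} (hx : x ∈ lamBox l) (hy : y ∈ lamBox l)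
    (hxy : y ∈ nbrs x) : dualBond x y ∉ boxBdry l := by
  intro h
  obtain ⟨x', hx', y', hy', hy'b, h⟩ := mem_contourOf.1 h
  rcases dualBond_inj hxy hy' h with ⟨-, rfl⟩ | ⟨rfl, -⟩
  · exact hy'b hy
  · exact hy'b hx

lemma exists_of_mem_contourOf_sdiff_boxBdry {l : ℕ} {Θ : Finset Site} (hT : Θ ⊆ lamBox l)
    {e : DBond} (he : e ∈ contourOf Θ \ boxBdry l) :
    ∃ x ∈ Θ, ∃ y ∈ nbrs x, y ∈ lamBox l ∧ y ∉ Θ ∧ e = dualBond x y := by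
  obtain ⟨heγ, hbdry⟩ := Finset.mem_sdiff.1 he
  obtain ⟨x, hx, y, hy, hyΘ, rfl⟩ := mem_contourOf.1 heγ
  refine ⟨x, hx, y, hy, ?_, hyΘ, rfl⟩
  by_contra hyb
  exact hbdry (mem_contourOf.2 ⟨x, hT hx, y, hy, hyb, rfl⟩)

lemma exists_of_mem_contourOf_inter_boxBdry {l : ℕ} {Θ : Finset Site}
    (hT : Θ ⊆ lamBox l) {b : DBond} (hb : b ∈ contourOf Θ ∩ boxBdry l) :
    ∃ x ∈ Θ, ∃ y ∈ nbrs x, y ∉ lamBox l ∧ b = dualBond x y := by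
  obtain ⟨hbγ, hbdry⟩ := Finset.mem_inter.1 hb
  obtain ⟨x, hx, y, hy, -, rfl⟩ := mem_contourOf.1 hbγ
  exact ⟨x, hx, y, hy, fun hyb => dualBond_notMem_boxBdry (hT hx) hyb hy hbdry, rfl⟩

lemma contourOf_image_swap (Θ : Finset Site) :
    contourOf (Θ.image Prod.swap) = (contourOf Θ).image (Sym2.map Prod.swap) := by
  ext e
  simp only [mem_contourOf, Finset.mem_image]
  constructor
  · rintro ⟨_, ⟨x, hx, rfl⟩, y, hy, hyΘ, rfl⟩
    rw [← Prod.swap_swap y, swap_mem_nbrs_swap] at hy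
    refine ⟨dualBond x y.swap, ⟨x, hx, y.swap, hy, fun h => hyΘ ⟨_, h, y.swap_swap⟩, rfl⟩, ?_⟩
    rw [← dualBond_swap hy, Prod.swap_swap]
  · rintro ⟨_, ⟨x, hx, y, hy, hyΘ, rfl⟩, rfl⟩
    refine ⟨x.swap, ⟨x, hx, rfl⟩, y.swap, swap_mem_nbrs_swap.2 hy, ?_, (dualBond_swap hy).symm⟩
    rintro ⟨z, hz, hzy⟩
    rw [Prod.swap_injective hzy] at hz
    exact hyΘ hz

lemma boxBdry_image_swap (l : ℕ) : (boxBdry l).image (Sym2.map Prod.swap) = boxBdry l := by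
  have hbox : (lamBox l).image Prod.swap = lamBox l := by
    ext x
    refine ⟨?_, fun hx => Finset.mem_image.2 ⟨x.swap, swap_mem_lamBox.2 hx, x.swap_swap⟩⟩
    intro hx
    obtain ⟨y, hy, rfl⟩ := Finset.mem_image.1 hx
    exact swap_mem_lamBox.2 hy
  rw [boxBdry, ← contourOf_image_swap, hbox]

lemma touches_image_swap {l : ℕ} {γ : Finset DBond} {j j' : ℤ}
    (h : ∀ v : Site, onSide l j v.swap ↔ onSide l j' v) :
    touches l j (γ.image (Sym2.map Prod.swap)) ↔ touches l j' γ := by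
  simp only [touches, Finset.mem_image]
  constructor
  · rintro ⟨_, ⟨e, he, rfl⟩, w, hw, hs⟩
    obtain ⟨v, hv, rfl⟩ := Sym2.mem_map.1 hw
    exact ⟨e, he, v, hv, (h v).1 hs⟩
  · rintro ⟨e, he, v, hv, hs⟩
    exact ⟨_, ⟨e, he, rfl⟩, v.swap, Sym2.mem_map.2 ⟨v, hv, rfl⟩, (h v).2 hs⟩

lemma ChainIn.refl {d : Site → Site → ℤ} {S : Set Site} {x : Site} (hx : x ∈ S) :
    ChainIn d S x x :=
  ⟨[x], List.isChain_singleton x, rfl, rfl, by simpa⟩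

lemma ChainIn.cons {d : Site → Site → ℤ} {S : Set Site} {x y z : Site}
    (hxy : d x y = 1) (hx : x ∈ S) (h : ChainIn d S y z) : ChainIn d S x z := by
  obtain ⟨_ | ⟨a, L⟩, hL, hhead, hlast, hmem⟩ := h
  · simp at hhead
  · obtain rfl : a = y := by simpa using hhead
    refine ⟨x :: a :: L, List.isChain_cons_cons.2 ⟨hxy, hL⟩, rfl, by simpa using hlast, ?_⟩
    simpa [hx] using hmem

lemma ChainIn.snoc {d : Site → Site → ℤ} {S : Set Site} {x y z : Site}
    (h : ChainIn d S x y) (hyz : d y z = 1) (hz : z ∈ S) : ChainIn d S x z := by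
  obtain ⟨L, hL, hhead, hlast, hmem⟩ := h
  have hne : L ≠ [] := by rintro rfl; simp at hhead
  refine ⟨L ++ [z], hL.append (by simp) ?_, by rw [List.head?_append_of_ne_nil _ hne, hhead],
    by simp, ?_⟩
  · intro b hb c hc
    obtain rfl : b = y := by rw [hlast] at hb; simpa using hb.symm
    obtain rfl : c = z := by simpa using hc.symm
    exact hyz
  · intro b hb
    rcases List.mem_append.1 hb with hb | hb
    · exact hmem b hb
    · exact (List.mem_singleton.1 hb) ▸ hz

lemma notMem_fill_of_path {C : Finset Site} {x : Site} (f : ℕ → Site) (hf : f.Injective)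
    (h0 : f 0 = x) (hstep : ∀ n, d1 (f n) (f (n + 1)) = 1) (hC : ∀ n, f n ∉ C) :
    x ∉ fill C := by
  have hpath : ∀ n, f n ∈ l1Comp ((↑C : Set Site)ᶜ) x := by
    intro n
    induction n with
    | zero => exact h0 ▸ ChainIn.refl (hC 0)
    | succ n ih => exact ih.snoc (hstep n) (hC (n + 1))
  rintro (hx | hfin)
  · exact hC 0 (h0 ▸ hx)
  · exact Set.infinite_of_injective_forall_mem hf hpath hfin

lemma subset_lamBox_of_isEContour {l : ℕ} {σ : Site → ℤ} {ε : ℤ} {Θ : Finset Site}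
    (hc : IsEContour l σ ε Θ) : Θ ⊆ lamBox l := by
  obtain ⟨C, hC, hΘ⟩ := hc
  intro x hxΘ
  by_contra hx
  have hxC : x ∈ fill C := by rw [← hΘ]; exact hxΘ
  have hCbox : ∀ y, y ∉ lamBox l → y ∉ C := fun y hy hyC => hy (hC.2.1 y hyC).1
  rw [mem_lamBox] at hx
  rcases (by omega : lamHi l < x.1 ∨ x.1 < lamLo l ∨ lamHi l < x.2 ∨ x.2 < lamLo l)
    with h | h | h | h
  · refine notMem_fill_of_path (fun n : ℕ => (x.1 + n, x.2)) (fun n m h => ?_) (by simp)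
      (by simp [d1]) (fun n => hCbox _ (by simp [mem_lamBox]; omega)) hxC
    simp only [Prod.ext_iff] at h; omega
  · refine notMem_fill_of_path (fun n : ℕ => (x.1 - n, x.2)) (fun n m h => ?_) (by simp)
      (by simp [d1]) (fun n => hCbox _ (by simp [mem_lamBox]; omega)) hxC
    simp only [Prod.ext_iff] at h; omega
  · refine notMem_fill_of_path (fun n : ℕ => (x.1, x.2 + n)) (fun n m h => ?_) (by simp)
      (by simp [d1]) (fun n => hCbox _ (by simp [mem_lamBox]; omega)) hxC
    simp only [Prod.ext_iff] at h; omega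
  · refine notMem_fill_of_path (fun n : ℕ => (x.1, x.2 - n)) (fun n m h => ?_) (by simp)
      (by simp [d1]) (fun n => hCbox _ (by simp [mem_lamBox]; omega)) hxC
    simp only [Prod.ext_iff] at h; omega

lemma mul_eq_neg_one_of_isEContour {l : ℕ} {σ : Site → ℤ} {ε : ℤ} {Θ : Finset Site}
    (hσ : ∀ x ∈ lamBox l, σ x = 1 ∨ σ x = -1) (hc : IsEContour l σ ε Θ) {x y : Site}
    (hxΘ : x ∈ Θ) (hy : y ∈ lamBox l) (hyΘ : y ∉ Θ) (hxy : y ∈ nbrs x) : σ x * σ y = -1 := by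
  obtain ⟨C, ⟨-, hCσ, -, hCmax⟩, hΘ⟩ := hc
  have hyC : y ∉ fill C := by rw [← hΘ]; exact hyΘ
  have hd := d1_eq_one_of_mem_nbrs hxy
  -- otherwise `y`, adjacent to `x` and outside `C`, would share the finite component of `x` in `Cᶜ`
  have hxC : x ∈ C := by
    by_contra hxC
    have hxfill : x ∈ fill C := by rw [← hΘ]; exact hxΘ
    rcases hxfill with hx | hfin
    · exact hxC hx
    · exact hyC (Or.inr (hfin.subset fun z hz => ChainIn.cons hd hxC hz))
  have hσx : σ x = ε := (hCσ x hxC).2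
  have hσy : σ y ≠ ε := fun h => hyC (Or.inl (hCmax y hy h ⟨x, hxC, hd⟩))
  rcases hσ x (hCσ x hxC).1 with h | h <;> rcases hσ y hy with h' | h' <;>
    simp only [h, h'] at hσx hσy ⊢ <;> omega

noncomputable def innerPairs (l : ℕ) : Finset ((_ : Site) × Site) :=
  (lamBox l).sigma fun x => (nbrs x).filter (· ∈ lamBox l)

noncomputable def outerPairs (l : ℕ) : Finset ((_ : Site) × Site) :=
  (lamBox l).sigma fun x => (nbrs x).filter (· ∉ lamBox l)

lemma Ham_sub_Ham (l : ℕ) (ω : Site → ℝ) (σ τ : Site → ℤ) :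
    Ham l ω σ - Ham l ω τ =
      ∑ z ∈ innerPairs l, (((τ z.1 * τ z.2 : ℤ) : ℝ) - ((σ z.1 * σ z.2 : ℤ) : ℝ)) / 2 +
        ∑ z ∈ outerPairs l, ((τ z.1 : ℝ) - σ z.1) * ω z.2 := by
  simp only [Ham, innerPairs, outerPairs, Finset.sum_sigma', ← Finset.sum_div,
    Finset.sum_sub_distrib, sub_mul]
  ring

lemma flipC_inner_term {l : ℕ} {σ : Site → ℤ} {ε : ℤ} {Θ : Finset Site}
    (hσ : ∀ x ∈ lamBox l, σ x = 1 ∨ σ x = -1) (hc : IsEContour l σ ε Θ) {x y : Site}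
    (hx : x ∈ lamBox l) (hy : y ∈ lamBox l) (hxy : y ∈ nbrs x) :
    (((flipC Θ σ x * flipC Θ σ y : ℤ) : ℝ) - ((σ x * σ y : ℤ) : ℝ)) / 2 =
      (if x ∈ Θ ∧ y ∉ Θ then 1 else 0) + (if x ∉ Θ ∧ y ∈ Θ then 1 else 0) := by
  by_cases hxΘ : x ∈ Θ <;> by_cases hyΘ : y ∈ Θ
  · simp [flipC, hxΘ, hyΘ]
  · have h : (σ x : ℝ) * σ y = -1 := by
      exact_mod_cast mul_eq_neg_one_of_isEContour hσ hc hxΘ hy hyΘ hxy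
    simp only [flipC, if_pos hxΘ, if_neg hyΘ]
    rw [if_pos ⟨hxΘ, hyΘ⟩, if_neg fun h => h.1 hxΘ]
    push_cast
    linarith
  · have h : (σ x : ℝ) * σ y = -1 := by
      rw [mul_comm]
      exact_mod_cast mul_eq_neg_one_of_isEContour hσ hc hyΘ hx hxΘ (mem_nbrs_comm.1 hxy)
    simp only [flipC, if_neg hxΘ, if_pos hyΘ]
    rw [if_neg fun h => h.2 hyΘ, if_pos ⟨hxΘ, hyΘ⟩]
    push_cast
    linarith
  · simp [flipC, hxΘ, hyΘ]

lemma flipC_outer_term {l : ℕ} {σ : Site → ℤ} {ω : Site → ℝ} {Θ : Finset Site}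
    (hσ : ∀ x ∈ lamBox l, σ x = 1 ∨ σ x = -1) (hω : ∀ y ∈ extBdry l, |ω y| ≤ 1) {x y : Site}
    (hx : x ∈ lamBox l) (hy : y ∉ lamBox l) (hxy : y ∈ nbrs x) :
    -2 * (if x ∈ Θ then 1 else 0) ≤ ((flipC Θ σ x : ℝ) - σ x) * ω y := by
  have hωy := abs_le.1 (hω y ⟨hy, x, hx, d1_eq_one_of_mem_nbrs hxy⟩)
  by_cases hxΘ : x ∈ Θ
  · simp only [flipC, if_pos hxΘ]
    push_cast
    rcases hσ x hx with h | h <;> rw [h] <;> push_cast <;> linarith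
  · simp [flipC, hxΘ]

lemma card_contourOf_sdiff_boxBdry_le {l : ℕ} {Θ : Finset Site} (hT : Θ ⊆ lamBox l) :
    #(contourOf Θ \ boxBdry l) ≤ #((innerPairs l).filter fun z => z.1 ∈ Θ ∧ z.2 ∉ Θ) ∧
      #(contourOf Θ \ boxBdry l) ≤ #((innerPairs l).filter fun z => z.1 ∉ Θ ∧ z.2 ∈ Θ) := by
  constructor
  · refine Finset.card_le_card_of_surjOn (fun z => dualBond z.1 z.2) fun e he => ?_
    obtain ⟨x, hx, y, hy, hyb, hyΘ, rfl⟩ := exists_of_mem_contourOf_sdiff_boxBdry hT he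
    exact ⟨⟨x, y⟩, by simp [innerPairs, hT hx, hy, hyb, hx, hyΘ], rfl⟩
  · refine Finset.card_le_card_of_surjOn (fun z => dualBond z.2 z.1) fun e he => ?_
    obtain ⟨x, hx, y, hy, hyb, hyΘ, rfl⟩ := exists_of_mem_contourOf_sdiff_boxBdry hT he
    exact ⟨⟨y, x⟩, by simp [innerPairs, hT hx, mem_nbrs_comm.1 hy, hyb, hx, hyΘ], rfl⟩

lemma card_filter_outerPairs_le {l : ℕ} {Θ : Finset Site} (hT : Θ ⊆ lamBox l) :
    #((outerPairs l).filter fun z => z.1 ∈ Θ) ≤ #(contourOf Θ ∩ boxBdry l) := by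
  refine Finset.card_le_card_of_injOn (fun z => dualBond z.1 z.2) (fun z hz => ?_) ?_
  · simp only [outerPairs, Finset.coe_filter, Finset.mem_sigma, Finset.mem_filter] at hz
    obtain ⟨⟨hx, hy, hyb⟩, hxΘ⟩ := hz
    exact Finset.mem_inter.2 ⟨mem_contourOf.2 ⟨_, hxΘ, _, hy, fun h => hyb (hT h), rfl⟩,
      mem_contourOf.2 ⟨_, hx, _, hy, hyb, rfl⟩⟩
  · rintro ⟨x, y⟩ hz ⟨x', y'⟩ hz' h
    simp only [outerPairs, Finset.coe_filter, Finset.mem_sigma, Finset.mem_filter] at hz hz'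
    rcases dualBond_inj hz.1.2.1 hz'.1.2.1 h with ⟨rfl, rfl⟩ | ⟨rfl, -⟩
    · rfl
    · exact absurd hz.1.1 hz'.1.2.2

theorem two_mul_card_sdiff_sub_two_mul_card_inter_le_dH {l : ℕ} {σ : Site → ℤ} {ε : ℤ}
    {ω : Site → ℝ} {Θ : Finset Site} (hσ : ∀ x ∈ lamBox l, σ x = 1 ∨ σ x = -1)
    (hω : ∀ y ∈ extBdry l, |ω y| ≤ 1) (hc : IsEContour l σ ε Θ) :
    2 * (#(contourOf Θ \ boxBdry l) : ℝ) - 2 * #(contourOf Θ ∩ boxBdry l) ≤ dH l ω [Θ] σ := by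
  have hT := subset_lamBox_of_isEContour hc
  have hinner : ∑ z ∈ innerPairs l,
      (((flipC Θ σ z.1 * flipC Θ σ z.2 : ℤ) : ℝ) - ((σ z.1 * σ z.2 : ℤ) : ℝ)) / 2 =
        #((innerPairs l).filter fun z => z.1 ∈ Θ ∧ z.2 ∉ Θ) +
          #((innerPairs l).filter fun z => z.1 ∉ Θ ∧ z.2 ∈ Θ) := by
    rw [← Finset.sum_boole, ← Finset.sum_boole, ← Finset.sum_add_distrib]
    refine Finset.sum_congr rfl fun z hz => ?_
    simp only [innerPairs, Finset.mem_sigma, Finset.mem_filter] at hz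
    exact flipC_inner_term hσ hc hz.1 hz.2.2 hz.2.1
  have houter : -2 * (#((outerPairs l).filter fun z => z.1 ∈ Θ) : ℝ) ≤
      ∑ z ∈ outerPairs l, ((flipC Θ σ z.1 : ℝ) - σ z.1) * ω z.2 := by
    rw [← Finset.sum_boole, Finset.mul_sum]
    refine Finset.sum_le_sum fun z hz => ?_
    simp only [outerPairs, Finset.mem_sigma, Finset.mem_filter] at hz
    exact flipC_outer_term hσ hω hz.1 hz.2.2 hz.2.1
  obtain ⟨h₁, h₂⟩ := card_contourOf_sdiff_boxBdry_le hT
  have h₃ := card_filter_outerPairs_le hT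
  rw [dH, List.foldr_cons, List.foldr_nil, Ham_sub_Ham, hinner]
  have : (#(contourOf Θ \ boxBdry l) : ℝ) ≤ _ := Nat.cast_le.2 h₁
  have : (#(contourOf Θ \ boxBdry l) : ℝ) ≤ _ := Nat.cast_le.2 h₂
  have : (#((outerPairs l).filter fun z => z.1 ∈ Θ) : ℝ) ≤ _ := Nat.cast_le.2 h₃
  linarith

noncomputable def rowOf (e : DBond) : ℤ :=
  Sym2.lift ⟨fun v w => max v.2 w.2, fun _ _ => max_comm _ _⟩ e

lemma rowOf_vertical (c k : ℤ) : rowOf s((c, k - 1), (c, k)) = k := by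
  simp [rowOf]

lemma not_isHorizD_vertical (c k : ℤ) : ¬ isHorizD s((c, k - 1), (c, k)) := by
  simp [isHorizD_mk]

lemma exists_row_of_mem_contourOf_inter_boxBdry {l : ℕ} {Θ : Finset Site} (hT : Θ ⊆ lamBox l)
    (h2 : ¬ touches l 2 (contourOf Θ)) (hm2 : ¬ touches l (-2) (contourOf Θ)) {b : DBond}
    (hb : b ∈ contourOf Θ ∩ boxBdry l) :
    ∃ k, lamLo l ≤ k ∧ k ≤ lamHi l ∧
      (b = s((lamHi l, k - 1), (lamHi l, k)) ∧ (lamHi l, k) ∈ Θ ∨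
        b = s((lamLo l - 1, k - 1), (lamLo l - 1, k)) ∧ (lamLo l, k) ∈ Θ) := by
  have hbγ := (Finset.mem_inter.1 hb).1
  obtain ⟨x, hxΘ, y, hy, hyb, rfl⟩ := exists_of_mem_contourOf_inter_boxBdry hT hb
  have hx := mem_lamBox.1 (hT hxΘ)
  rcases mem_nbrs.1 hy with rfl | rfl | rfl | rfl <;> simp only [mem_lamBox] at hyb
  · have h1 : x.1 = lamHi l := by omega
    exact ⟨x.2, hx.2.2.1, hx.2.2.2, Or.inl ⟨by rw [dualBond_right, h1], by rwa [← h1]⟩⟩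
  · have h1 : x.1 = lamLo l := by omega
    exact ⟨x.2, hx.2.2.1, hx.2.2.2, Or.inr ⟨by rw [dualBond_left, h1], by rwa [← h1]⟩⟩
  · rw [dualBond_up] at hbγ
    exact absurd ⟨_, hbγ, x, Sym2.mem_mk_right _ _, by unfold onSide; omega⟩ h2
  · rw [dualBond_down] at hbγ
    exact absurd ⟨_, hbγ, (x.1, x.2 - 1), Sym2.mem_mk_right _ _, by unfold onSide; omega⟩ hm2

lemma not_row_ends_mem_of_not_horizCrossing {l : ℕ} {Θ : Finset Site} (hT : Θ ⊆ lamBox l)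
    (hH : ¬ HorizCrossing l (contourOf Θ)) {k : ℤ} (hk₁ : lamLo l ≤ k) (hk₂ : k ≤ lamHi l) :
    ¬((lamLo l, k) ∈ Θ ∧ (lamHi l, k) ∈ Θ) := by
  rintro ⟨hlo, hhi⟩
  have hout {x : Site} (hx : lamHi l < x.1 ∨ x.1 < lamLo l) : x ∉ Θ := fun h => by
    have := mem_lamBox.1 (hT h); omega
  refine hH ⟨⟨_, mem_contourOf.2 ⟨_, hhi, _, mem_nbrs.2 (Or.inl rfl), hout (by simp), rfl⟩,
      (lamHi l, k), ?_, by unfold onSide; omega⟩,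
    ⟨_, mem_contourOf.2 ⟨_, hlo, _, mem_nbrs.2 (Or.inr (Or.inl rfl)), hout (by simp), rfl⟩,
      (lamLo l - 1, k), ?_, by unfold onSide; omega⟩⟩
  · rw [dualBond_right]; exact Sym2.mem_mk_right _ _
  · rw [dualBond_left]; exact Sym2.mem_mk_right _ _

lemma exists_vertical_mem_contourOf_sdiff_boxBdry {l : ℕ} {Θ : Finset Site} {k : ℤ}
    (hk₁ : lamLo l ≤ k) (hk₂ : k ≤ lamHi l) (h : ¬((lamLo l, k) ∈ Θ ↔ (lamHi l, k) ∈ Θ)) :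
    ∃ m, s((m, k - 1), (m, k)) ∈ contourOf Θ \ boxBdry l := by
  obtain ⟨m, hm₁, hm₂, hm⟩ :=
    Int.exists_not_iff_add_one (p := fun m => (m, k) ∈ Θ) (by omega) h
  have hnb : ((m + 1, k) : Site) ∈ nbrs (m, k) := mem_nbrs.2 (Or.inl rfl)
  refine ⟨m, ?_⟩
  rw [← dualBond_right (m, k)]
  exact Finset.mem_sdiff.2 ⟨dualBond_mem_contourOf hnb hm,
    dualBond_notMem_boxBdry (by simp [mem_lamBox]; omega) (by simp [mem_lamBox]; omega) hnb⟩

open Classical in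
lemma card_inter_boxBdry_le_card_filter_not_isHorizD {l : ℕ} {Θ : Finset Site}
    (hT : Θ ⊆ lamBox l) (h2 : ¬ touches l 2 (contourOf Θ))
    (hm2 : ¬ touches l (-2) (contourOf Θ)) (hH : ¬ HorizCrossing l (contourOf Θ)) :
    #(contourOf Θ ∩ boxBdry l) ≤ #((contourOf Θ \ boxBdry l).filter fun e => ¬ isHorizD e) := by
  have hrow := fun b (hb : b ∈ contourOf Θ ∩ boxBdry l) =>
    exists_row_of_mem_contourOf_inter_boxBdry hT h2 hm2 hb
  have hinj : Set.InjOn rowOf ↑(contourOf Θ ∩ boxBdry l) := by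
    intro b hb b' hb' hbb'
    obtain ⟨k, hk₁, hk₂, hb⟩ := hrow b hb
    obtain ⟨k', -, -, hb'⟩ := hrow b' hb'
    rcases hb with ⟨rfl, hhi⟩ | ⟨rfl, hlo⟩ <;> rcases hb' with ⟨rfl, hhi'⟩ | ⟨rfl, hlo'⟩ <;>
      simp only [rowOf_vertical] at hbb' <;> subst hbb'
    · rfl
    · exact (not_row_ends_mem_of_not_horizCrossing hT hH hk₁ hk₂ ⟨hlo', hhi⟩).elim
    · exact (not_row_ends_mem_of_not_horizCrossing hT hH hk₁ hk₂ ⟨hlo, hhi'⟩).elim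
    · rfl
  calc #(contourOf Θ ∩ boxBdry l) = #((contourOf Θ ∩ boxBdry l).image rowOf) :=
        (Finset.card_image_of_injOn hinj).symm
    _ ≤ #(((contourOf Θ \ boxBdry l).filter fun e => ¬ isHorizD e).image rowOf) := by
        refine Finset.card_le_card fun r hr => ?_
        obtain ⟨b, hb, rfl⟩ := Finset.mem_image.1 hr
        obtain ⟨k, hk₁, hk₂, hbk⟩ := hrow b hb
        have hboth := not_row_ends_mem_of_not_horizCrossing hT hH hk₁ hk₂
        obtain ⟨m, hm⟩ := exists_vertical_mem_contourOf_sdiff_boxBdry hk₁ hk₂ (by tauto)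
        refine Finset.mem_image.2 ⟨_, Finset.mem_filter.2 ⟨hm, not_isHorizD_vertical m k⟩, ?_⟩
        rcases hbk with ⟨rfl, -⟩ | ⟨rfl, -⟩ <;> simp only [rowOf_vertical]
    _ ≤ _ := Finset.card_image_le

theorem horizCount_add_card_inter_boxBdry_le {l : ℕ} {Θ : Finset Site} (hT : Θ ⊆ lamBox l)
    (h2 : ¬ touches l 2 (contourOf Θ)) (hm2 : ¬ touches l (-2) (contourOf Θ))
    (hH : ¬ HorizCrossing l (contourOf Θ)) :
    horizCount (contourOf Θ) + #(contourOf Θ ∩ boxBdry l) ≤ #(contourOf Θ \ boxBdry l) := by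
  classical
  have hhoriz : (contourOf Θ).filter isHorizD = (contourOf Θ \ boxBdry l).filter isHorizD := by
    ext e
    simp only [Finset.mem_filter, Finset.mem_sdiff]
    refine ⟨fun h => ⟨⟨h.1, fun hb => ?_⟩, h.2⟩, fun h => ⟨h.1.1, h.2⟩⟩
    obtain ⟨k, -, -, ⟨rfl, -⟩ | ⟨rfl, -⟩⟩ :=
      exists_row_of_mem_contourOf_inter_boxBdry hT h2 hm2 (Finset.mem_inter.2 ⟨h.1, hb⟩) <;>
      exact not_isHorizD_vertical _ _ h.2
  have := Finset.card_filter_add_card_filter_not (s := contourOf Θ \ boxBdry l) isHorizD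
  have := card_inter_boxBdry_le_card_filter_not_isHorizD hT h2 hm2 hH
  rw [horizCount, hhoriz]
  omega

theorem vertCount_add_card_inter_boxBdry_le {l : ℕ} {Θ : Finset Site} (hT : Θ ⊆ lamBox l)
    (h1 : ¬ touches l 1 (contourOf Θ)) (hm1 : ¬ touches l (-1) (contourOf Θ))
    (hV : ¬ VertCrossing l (contourOf Θ)) :
    vertCount (contourOf Θ) + #(contourOf Θ ∩ boxBdry l) ≤ #(contourOf Θ \ boxBdry l) := by
  classical
  have hinj := Sym2.map.injective (Prod.swap_injective (α := ℤ) (β := ℤ))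
  have hside : ∀ j j' : ℤ, (∀ v : Site, onSide l j v.swap ↔ onSide l j' v) →
      (touches l j (contourOf (Θ.image Prod.swap)) ↔ touches l j' (contourOf Θ)) :=
    fun j j' h => contourOf_image_swap Θ ▸ touches_image_swap h
  have key := horizCount_add_card_inter_boxBdry_le
    (Finset.image_subset_iff.2 fun x hx => swap_mem_lamBox.2 (hT hx))
    (by rwa [hside 2 1 (by simp [onSide])]) (by rwa [hside (-2) (-1) (by simp [onSide])])
    (by rwa [HorizCrossing, hside 1 2 (by simp [onSide]), hside (-1) (-2) (by simp [onSide])])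
  rw [contourOf_image_swap, ← boxBdry_image_swap, ← Finset.image_inter _ _ hinj,
    ← Finset.image_sdiff _ _ hinj, Finset.card_image_of_injective _ hinj,
    Finset.card_image_of_injective _ hinj, horizCount, Finset.filter_image,
    Finset.card_image_of_injective _ hinj] at key
  simpa only [vertCount, isHorizD_map_swap] using key

theorem stmt9_general (l : ℕ) (σ : Site → ℤ) (hσ : ∀ x ∈ lamBox l, σ x = 1 ∨ σ x = -1)
    (ε : ℤ) (ω : Site → ℝ)
    (hω : ∀ y ∈ extBdry l, |ω y| ≤ 1)
    (Θ : Finset Site) (hc : IsEContour l σ ε Θ)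
    (j : ℤ)
    (hone : ∀ j', (j' = 1 ∨ j' = -1 ∨ j' = 2 ∨ j' = -2) → j' ≠ j →
      ¬ touches l j' (contourOf Θ)) :
    ((j = 1 ∨ j = -1) → (horizCount (contourOf Θ) : ℝ) ≤ dH l ω [Θ] σ) ∧
      ((j = 2 ∨ j = -2) → (vertCount (contourOf Θ) : ℝ) ≤ dH l ω [Θ] σ) := by
  have hT := subset_lamBox_of_isEContour hc
  have hΔ := two_mul_card_sdiff_sub_two_mul_card_inter_le_dH hσ hω hc
  have hbound (n : ℕ) (hn : n + #(contourOf Θ ∩ boxBdry l) ≤ #(contourOf Θ \ boxBdry l)) :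
      (n : ℝ) ≤ dH l ω [Θ] σ := by
    have : (n : ℝ) + #(contourOf Θ ∩ boxBdry l) ≤ #(contourOf Θ \ boxBdry l) := by
      exact_mod_cast hn
    linarith [n.cast_nonneg (α := ℝ)]
  have hno (j' : ℤ) (hj' : j' = 1 ∨ j' = -1 ∨ j' = 2 ∨ j' = -2 := by norm_num)
      (hne : j' ≠ j := by norm_num) : ¬ touches l j' (contourOf Θ) := hone j' hj' hne
  refine ⟨fun hj => hbound _ ?_, fun hj => hbound _ ?_⟩
  · rcases hj with rfl | rfl
    · exact horizCount_add_card_inter_boxBdry_le hT (hno 2) (hno (-2))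
        fun h => absurd h.2 (hno (-1))
    · exact horizCount_add_card_inter_boxBdry_le hT (hno 2) (hno (-2))
        fun h => absurd h.1 (hno 1)
  · rcases hj with rfl | rfl
    · exact vertCount_add_card_inter_boxBdry_le hT (hno 1) (hno (-1))
        fun h => absurd h.2 (hno (-2))
    · exact vertCount_add_card_inter_boxBdry_le hT (hno 1) (hno (-1))
        fun h => absurd h.1 (hno 2)

/-- If an (ε)-contour `γ` at `σ` in `Λ(l)` meets exactly one of the four
sides `F_l^j` of `Q(Λ(l))`, then `Δ_γ H^ω(σ)` is at least the number of horizontal dual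
bonds of `γ` if `j = ±1`, and at least the number of vertical dual bonds if `j = ±2`. -/
theorem stmt9 (l : ℕ) (σ : Site → ℤ) (hσ : ∀ x ∈ lamBox l, σ x = 1 ∨ σ x = -1)
    (ε : ℤ) (hε : ε = 1 ∨ ε = -1) (ω : Site → ℝ)
    (hω : ∀ y ∈ extBdry l, |ω y| ≤ 1)
    (Θ : Finset Site) (hc : IsEContour l σ ε Θ)
    (j : ℤ) (hj : j = 1 ∨ j = -1 ∨ j = 2 ∨ j = -2)
    (htj : touches l j (contourOf Θ))
    (hone : ∀ j', (j' = 1 ∨ j' = -1 ∨ j' = 2 ∨ j' = -2) → j' ≠ j →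
      ¬ touches l j' (contourOf Θ)) :
    ((j = 1 ∨ j = -1) → (horizCount (contourOf Θ) : ℝ) ≤ dH l ω [Θ] σ) ∧
      ((j = 2 ∨ j = -2) → (vertCount (contourOf Θ) : ℝ) ≤ dH l ω [Θ] σ) :=
  stmt9_general l σ hσ ε ω hω Θ hc j hone
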